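/- arXiv:1004.2437 — 2 statements merged into one kernel-verified Lean document; each statement's English description precedes it below -/
import Mathlib

section
/- ∫₀¹ log(x)/(x²+x+1) dx = 4π²/27 - (2/9)ψ'(1/3). -/
/-!
On `(0, 1]` we have `1 / (x² + x + 1) = (1 - x) / (1 - x³) = ∑ₖ (x^(3k) - x^(3k+1))`. Every term
of the resulting series for `log x / (x² + x + 1)` is `≤ 0`, so the terms are dominated by their
own negatives and the series can be integrated termwise. Since `∫₀¹ xⁿ log x = -1/(n+1)²`, the
integral equals `∑ₖ (1/(3k+2)² - 1/(3k+1)²)`. Splitting `ζ(2) = π²/6` by residues mod 3 gives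
`∑ₖ 1/(3k+1)² + ∑ₖ 1/(3k+2)² = (8/9) π²/6 = 4π²/27`, and `∑ₖ 1/(3k+1)² = ψ'(1/3) / 9`.
-/

open Real MeasureTheory Filter Topology Set intervalIntegral

/-- The trigamma function `ψ'(x) = ∑_{k=0}^∞ 1/(x+k)²`. -/
noncomputable def trigamma (x : ℝ) : ℝ := ∑' k : ℕ, 1 / (x + k) ^ 2

lemma trigamma_div (a : ℝ) {c : ℝ} (hc : c ≠ 0) :
    trigamma (a / c) = c ^ 2 * ∑' k : ℕ, 1 / (a + c * k) ^ 2 := by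
  rw [trigamma, ← tsum_mul_left]
  refine tsum_congr fun k => ?_
  rw [div_add' _ _ _ hc, mul_comm (k : ℝ) c, div_pow, one_div_div, mul_one_div]

lemma summable_one_div_add_mul_sq (j : ℕ) {N : ℕ} (hN : N ≠ 0) :
    Summable fun k : ℕ => 1 / ((j : ℝ) + N * k) ^ 2 := by
  have hinj : Function.Injective fun k : ℕ => j + N * k := fun a b h => by
    simpa [hN] using h
  simpa [Function.comp_def] using
    (Real.summable_one_div_nat_pow.2 one_lt_two).comp_injective hinj

lemma tsum_one_div_sq_one_mod_three_add_two_mod_three :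
    ∑' k : ℕ, 1 / ((1 : ℝ) + 3 * k) ^ 2 + ∑' k : ℕ, 1 / ((2 : ℝ) + 3 * k) ^ 2 =
      4 * π ^ 2 / 27 := by
  have hsplit := Nat.sumByResidueClasses (Real.summable_one_div_nat_pow.2 one_lt_two) 3
  rw [hasSum_zeta_two.tsum_eq,
    show ∀ g : ZMod 3 → ℝ, ∑ j, g j = g 0 + g 1 + g 2 from Fin.sum_univ_three] at hsplit
  simp only [show (0 : ZMod 3).val = 0 from rfl, show (1 : ZMod 3).val = 1 from rfl,
    show (2 : ZMod 3).val = 2 from rfl] at hsplit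
  push_cast at hsplit
  have hzero : ∑' k : ℕ, 1 / (0 + 3 * (k : ℝ)) ^ 2 = π ^ 2 / 54 := by
    rw [show (fun k : ℕ => 1 / (0 + 3 * (k : ℝ)) ^ 2) = fun k : ℕ => 1 / 9 * (1 / (k : ℝ) ^ 2)
      from funext fun k => by ring, tsum_mul_left, hasSum_zeta_two.tsum_eq]
    ring
  linarith

lemma sq_add_add_one_pos (x : ℝ) : 0 < x ^ 2 + x + 1 := by
  nlinarith [sq_nonneg (x + 1 / 2)]

lemma hasSum_pow_three_mul_sub_pow_three_mul_add_one {x : ℝ} (hx : |x| < 1) :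
    HasSum (fun k : ℕ => x ^ (3 * k) - x ^ (3 * k + 1)) (1 / (x ^ 2 + x + 1)) := by
  have hx3 : |x ^ 3| < 1 := by
    rw [abs_pow]; exact pow_lt_one₀ (abs_nonneg x) hx three_ne_zero
  have hx1 : 1 - x ≠ 0 := by linarith [le_abs_self x]
  have hq := (sq_add_add_one_pos x).ne'
  have hterm : (fun k : ℕ => x ^ (3 * k) - x ^ (3 * k + 1)) = fun k : ℕ => (x ^ 3) ^ k * (1 - x) :=
    funext fun k => by ring
  have hvalue : (1 - x ^ 3)⁻¹ * (1 - x) = 1 / (x ^ 2 + x + 1) := by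
    rw [show 1 - x ^ 3 = (1 - x) * (x ^ 2 + x + 1) by ring]
    field_simp
  rw [hterm, ← hvalue]
  exact (hasSum_geometric_of_abs_lt_one hx3).mul_right (1 - x)

lemma hasSum_pow_three_mul_sub_mul_log {x : ℝ} (hx : x ∈ Ioc (0 : ℝ) 1) :
    HasSum (fun k : ℕ => (x ^ (3 * k) - x ^ (3 * k + 1)) * log x) (log x / (x ^ 2 + x + 1)) := by
  rcases hx.2.lt_or_eq with hx1 | rfl
  · have := (hasSum_pow_three_mul_sub_pow_three_mul_add_one
      (abs_lt.2 ⟨by linarith [hx.1], hx1⟩)).mul_right (log x)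
    rwa [one_div_mul_eq_div] at this
  · simp [hasSum_zero]

lemma hasDerivAt_pow_succ_mul_log (n : ℕ) {x : ℝ} (hx : x ≠ 0) :
    HasDerivAt (fun x => log x * x ^ (n + 1) / (n + 1) - x ^ (n + 1) / (n + 1) ^ 2)
      (x ^ n * log x) x := by
  have hpow : HasDerivAt (fun x : ℝ => x ^ (n + 1)) ((n + 1 : ℝ) * x ^ n) x := by
    simpa using hasDerivAt_pow (n + 1) x
  refine ((((hasDerivAt_log hx).mul hpow).div_const (n + 1 : ℝ)).sub
    (hpow.div_const ((n + 1 : ℝ) ^ 2))).congr_deriv ?_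
  field_simp
  ring

lemma intervalIntegrable_pow_mul_log (n : ℕ) (a b : ℝ) :
    IntervalIntegrable (fun x => x ^ n * log x) volume a b :=
  intervalIntegrable_log'.continuousOn_mul (continuousOn_pow n)

lemma integral_pow_mul_log (n : ℕ) :
    ∫ x in (0 : ℝ)..1, x ^ n * log x = -1 / ((n : ℝ) + 1) ^ 2 := by
  have hlog : Tendsto (fun x => log x * x ^ (n + 1)) (𝓝[>] 0) (𝓝 0) := by
    simpa only [rpow_natCast] using
      tendsto_log_mul_rpow_nhdsGT_zero (r := ((n + 1 : ℕ) : ℝ)) (by positivity)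
  have hpow : Tendsto (fun x : ℝ => x ^ (n + 1)) (𝓝[>] 0) (𝓝 0) :=
    ((continuous_pow (n + 1)).tendsto' 0 0 (by simp)).mono_left nhdsWithin_le_nhds
  rw [integral_eq_sub_of_hasDerivAt_of_tendsto zero_lt_one
    (fun x hx => hasDerivAt_pow_succ_mul_log n hx.1.ne') (intervalIntegrable_pow_mul_log n 0 1)
    (by simpa using (hlog.div_const ((n : ℝ) + 1)).sub (hpow.div_const (((n : ℝ) + 1) ^ 2)))
    ((ContinuousAt.tendsto (by fun_prop (disch := norm_num))).mono_left nhdsWithin_le_nhds)]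
  simp
  ring

lemma hasSum_integral_of_nonpos {α ι : Type*} [MeasurableSpace α] [Countable ι] {μ : Measure α}
    {F : ι → α → ℝ} {f : α → ℝ} (hF_meas : ∀ n, AEStronglyMeasurable (F n) μ)
    (hF_nonpos : ∀ n, ∀ᵐ a ∂μ, F n a ≤ 0) (hf : Integrable f μ)
    (h_lim : ∀ᵐ a ∂μ, HasSum (fun n => F n a) (f a)) :
    HasSum (fun n => ∫ a, F n a ∂μ) (∫ a, f a ∂μ) := by
  refine hasSum_integral_of_dominated_convergence (fun n a => -F n a) hF_meas (fun n => ?_)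
    (h_lim.mono fun a ha => ha.neg.summable) (hf.neg.congr ?_) h_lim
  · filter_upwards [hF_nonpos n] with a ha
    exact (Real.norm_of_nonpos ha).le
  · filter_upwards [h_lim] with a ha
    exact ha.neg.tsum_eq.symm

lemma hasSum_integral_log_div_sq_add_add_one :
    HasSum (fun k : ℕ => 1 / ((2 : ℝ) + 3 * k) ^ 2 - 1 / ((1 : ℝ) + 3 * k) ^ 2)
      (∫ x in (0 : ℝ)..1, log x / (x ^ 2 + x + 1)) := by
  have hterm (k : ℕ) : ∫ x in (0 : ℝ)..1, (x ^ (3 * k) - x ^ (3 * k + 1)) * log x =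
      1 / ((2 : ℝ) + 3 * k) ^ 2 - 1 / ((1 : ℝ) + 3 * k) ^ 2 := by
    simp only [sub_mul]
    rw [integral_sub (intervalIntegrable_pow_mul_log _ 0 1)
      (intervalIntegrable_pow_mul_log _ 0 1), integral_pow_mul_log, integral_pow_mul_log]
    push_cast
    ring
  have hint : IntegrableOn (fun x => log x / (x ^ 2 + x + 1)) (Ioc 0 1) := by
    have hq : ContinuousOn (fun x : ℝ => (x ^ 2 + x + 1)⁻¹) (uIcc 0 1) :=
      (by fun_prop : Continuous fun x : ℝ => x ^ 2 + x + 1).continuousOn.inv₀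
        fun x _ => (sq_add_add_one_pos x).ne'
    simpa only [div_eq_mul_inv] using (intervalIntegrable_log'.mul_continuousOn hq).1
  simp only [← hterm, integral_of_le zero_le_one]
  refine hasSum_integral_of_nonpos (fun k => by measurability) (fun k => ?_) hint ?_
  all_goals rw [ae_restrict_iff' measurableSet_Ioc]
  · refine .of_forall fun x hx => mul_nonpos_of_nonneg_of_nonpos ?_ (log_nonpos hx.1.le hx.2)
    exact sub_nonneg.2 (pow_le_pow_of_le_one hx.1.le hx.2 (Nat.le_succ _))
  · exact .of_forall fun x hx => hasSum_pow_three_mul_sub_mul_log hx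

theorem stmt5 :
    ∫ x in (0:ℝ)..1, Real.log x / (x ^ 2 + x + 1) =
      4 * Real.pi ^ 2 / 27 - (2 / 9) * trigamma (1/3) := by
  have hA : Summable fun k : ℕ => 1 / ((1 : ℝ) + 3 * k) ^ 2 := by
    simpa using summable_one_div_add_mul_sq 1 three_ne_zero
  have hB : Summable fun k : ℕ => 1 / ((2 : ℝ) + 3 * k) ^ 2 := by
    simpa using summable_one_div_add_mul_sq 2 three_ne_zero
  rw [← hasSum_integral_log_div_sq_add_add_one.tsum_eq, hB.tsum_sub hA,
    trigamma_div 1 three_ne_zero]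
  linarith [tsum_one_div_sq_one_mod_three_add_two_mod_three]
end

section
/- ∫₀¹ log²(x)/(x²-x+1) dx = 10π³/(81√3). -/
/-!
On `(0, 1)` we have `1 / (x² - x + 1) = (1 + x) / (1 + x³) = ∑ (-1)ⁿ (x³ⁿ + x³ⁿ⁺¹)`, and the
substitution `x = e^{-t}` turns `∫₀¹ xᵏ log² x` into `Γ(3) / (k + 1)³ = 2 / (k + 1)³`. Up to sign
the terms are nonnegative with summable integrals, so integrating termwise gives
`∑ (-1)ⁿ (2 / (3n + 1)³ + 2 / (3n + 2)³)`. Since `sin (π m / 3)` is `0` or `(-1)ⁿ √3 / 2`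
according as `m = 3n` or `m ∈ {3n + 1, 3n + 2}`, this is `4 / √3` times the Fourier series
`∑ sin (π m / 3) / m³ = (2π)³ B₃(1/6) / 12 = 5π³ / 162`.
-/

open Real Set MeasureTheory
open scoped Nat

section ExpNegSubstitution

variable {E : Type*} [NormedAddCommGroup E] [NormedSpace ℝ E]

lemma image_exp_neg_Ioi_zero : (fun t : ℝ => exp (-t)) '' Ioi 0 = Ioo 0 1 := by
  ext x
  simp only [mem_image, mem_Ioi, mem_Ioo]
  constructor
  · rintro ⟨t, ht, rfl⟩
    exact ⟨exp_pos _, exp_lt_one_iff.mpr (neg_lt_zero.mpr ht)⟩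
  · rintro ⟨hx0, hx1⟩
    exact ⟨-log x, neg_pos.mpr (log_neg hx0 hx1), by rw [neg_neg, exp_log hx0]⟩

lemma hasDerivAt_exp_neg (t : ℝ) : HasDerivAt (fun t => exp (-t)) (-exp (-t)) t := by
  simpa using (hasDerivAt_neg t).exp

lemma injOn_exp_neg : InjOn (fun t : ℝ => exp (-t)) (Ioi 0) :=
  fun _ _ _ _ h => neg_injective (exp_injective h)

theorem integral_comp_exp_neg_Ioi (g : ℝ → E) :
    ∫ t in Ioi 0, exp (-t) • g (exp (-t)) = ∫ x in Ioo 0 1, g x := by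
  rw [← image_exp_neg_Ioi_zero]
  simpa [abs_of_pos (exp_pos _)] using (integral_image_eq_integral_abs_deriv_smul
    measurableSet_Ioi (fun t _ => (hasDerivAt_exp_neg t).hasDerivWithinAt) injOn_exp_neg g).symm

theorem integrableOn_comp_exp_neg_Ioi (g : ℝ → E) :
    IntegrableOn (fun t => exp (-t) • g (exp (-t))) (Ioi 0) ↔ IntegrableOn g (Ioo 0 1) := by
  rw [← image_exp_neg_Ioi_zero]
  simpa [abs_of_pos (exp_pos _)] using (integrableOn_image_iff_integrableOn_abs_deriv_smul
    measurableSet_Ioi (fun t _ => (hasDerivAt_exp_neg t).hasDerivWithinAt) injOn_exp_neg g).symm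

end ExpNegSubstitution

lemma exp_neg_smul_rpow_mul_neg_log_pow (s t : ℝ) (n : ℕ) :
    exp (-t) • (exp (-t) ^ s * (-log (exp (-t))) ^ n) = t ^ n * exp (-((s + 1) * t)) := by
  rw [log_exp, neg_neg, ← exp_mul, smul_eq_mul, show -((s + 1) * t) = -t + -t * s by ring,
    exp_add]
  ring

theorem integral_rpow_mul_neg_log_pow {s : ℝ} (hs : -1 < s) (n : ℕ) :
    ∫ x in Ioo 0 1, x ^ s * (-log x) ^ n = n ! / (s + 1) ^ (n + 1) := by
  rw [← integral_comp_exp_neg_Ioi]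
  simp_rw [exp_neg_smul_rpow_mul_neg_log_pow]
  have hGamma := integral_rpow_mul_exp_neg_mul_Ioi (a := n + 1) (by positivity)
    (by linarith : 0 < s + 1)
  rw [add_sub_cancel_right, Gamma_nat_eq_factorial, ← Nat.cast_succ] at hGamma
  simp only [rpow_natCast] at hGamma
  rw [hGamma, div_pow, one_pow, one_div_mul_eq_div]

theorem integrableOn_rpow_mul_neg_log_pow {s : ℝ} (hs : -1 < s) (n : ℕ) :
    IntegrableOn (fun x => x ^ s * (-log x) ^ n) (Ioo 0 1) := by
  rw [← integrableOn_comp_exp_neg_Ioi]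
  simp_rw [exp_neg_smul_rpow_mul_neg_log_pow]
  refine (integrableOn_rpow_mul_exp_neg_mul_rpow (s := n) (p := 1) (b := s + 1)
    (neg_one_lt_zero.trans_le n.cast_nonneg) one_pos (by linarith)).congr_fun
    (fun t _ => ?_) measurableSet_Ioi
  simp only [rpow_natCast, rpow_one, neg_mul]

lemma integral_pow_mul_log_sq (k : ℕ) :
    ∫ x in Ioo 0 1, x ^ k * log x ^ 2 = 2 / (k + 1) ^ 3 := by
  simpa [rpow_natCast, neg_sq] using
    integral_rpow_mul_neg_log_pow (neg_one_lt_zero.trans_le k.cast_nonneg) 2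

lemma integrableOn_pow_mul_log_sq (k : ℕ) :
    IntegrableOn (fun x => x ^ k * log x ^ 2) (Ioo 0 1) := by
  simpa [rpow_natCast, neg_sq] using
    integrableOn_rpow_mul_neg_log_pow (neg_one_lt_zero.trans_le k.cast_nonneg) 2

lemma integrableOn_pow_add_pow_succ_mul_log_sq (k : ℕ) :
    IntegrableOn (fun x => (x ^ k + x ^ (k + 1)) * log x ^ 2) (Ioo 0 1) :=
  ((integrableOn_pow_mul_log_sq k).add (integrableOn_pow_mul_log_sq (k + 1))).congr_fun
    (fun _ _ => (add_mul _ _ _).symm) measurableSet_Ioo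

lemma integral_pow_add_pow_succ_mul_log_sq (k : ℕ) :
    ∫ x in Ioo 0 1, (x ^ k + x ^ (k + 1)) * log x ^ 2 = 2 / (k + 1) ^ 3 + 2 / (k + 2) ^ 3 := by
  simp only [add_mul]
  rw [integral_add (integrableOn_pow_mul_log_sq k) (integrableOn_pow_mul_log_sq (k + 1)),
    integral_pow_mul_log_sq, integral_pow_mul_log_sq]
  push_cast
  ring

theorem hasSum_inv_sq_sub_add_one {𝕜 : Type*} [NormedField 𝕜] [CompleteSpace 𝕜] {x : 𝕜}
    (hx : ‖x‖ < 1) :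
    HasSum (fun n : ℕ => (-1) ^ n * (x ^ (3 * n) + x ^ (3 * n + 1))) (x ^ 2 - x + 1)⁻¹ := by
  have hx3 : ‖-x ^ 3‖ < 1 := by
    rw [norm_neg, norm_pow]
    exact pow_lt_one₀ (norm_nonneg x) hx (by norm_num)
  have h1x : 1 + x ≠ 0 := by
    intro h
    rw [eq_neg_of_add_eq_zero_right h, norm_neg, norm_one] at hx
    exact lt_irrefl 1 hx
  have hsum : (1 - -x ^ 3)⁻¹ * (1 + x) = (x ^ 2 - x + 1)⁻¹ := by
    rw [show 1 - -x ^ 3 = (1 + x) * (x ^ 2 - x + 1) by ring, mul_inv, mul_right_comm,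
      inv_mul_cancel₀ h1x, one_mul]
  rw [← hsum]
  refine ((hasSum_geometric_of_norm_lt_one hx3).mul_right (1 + x)).congr_fun fun n => ?_
  rw [neg_pow (x ^ 3), ← pow_mul]
  ring

lemma summable_inv_cube_three_mul_add :
    Summable (fun n : ℕ => 2 / (3 * (n : ℝ) + 1) ^ 3 + 2 / (3 * (n : ℝ) + 2) ^ 3) := by
  have hinj (r : ℕ) : (fun n : ℕ => 3 * n + r).Injective := fun a b h => by
    simp only at h
    omega
  have h := (summable_one_div_nat_pow (p := 3)).mpr (by norm_num)
  simpa [Function.comp_def, div_eq_mul_inv] using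
    ((h.comp_injective (hinj 1)).mul_left 2).add ((h.comp_injective (hinj 2)).mul_left 2)

theorem hasSum_integral_log_sq_div_sq_sub_add_one :
    HasSum (fun n : ℕ => (-1 : ℝ) ^ n * (2 / (3 * n + 1) ^ 3 + 2 / (3 * n + 2) ^ 3))
      (∫ x in Ioo 0 1, log x ^ 2 / (x ^ 2 - x + 1)) := by
  set F : ℕ → ℝ → ℝ := fun n x => (-1) ^ n * ((x ^ (3 * n) + x ^ (3 * n + 1)) * log x ^ 2)
  have hF_int (n : ℕ) : IntegrableOn (F n) (Ioo 0 1) :=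
    (integrableOn_pow_add_pow_succ_mul_log_sq (3 * n)).const_mul _
  have hF_integral (n : ℕ) : ∫ x in Ioo 0 1, F n x =
      (-1) ^ n * (2 / (3 * n + 1) ^ 3 + 2 / (3 * n + 2) ^ 3) := by
    rw [integral_const_mul, integral_pow_add_pow_succ_mul_log_sq]
    push_cast
    ring_nf
  have hF_norm (n : ℕ) :
      ∫ x in Ioo 0 1, ‖F n x‖ = 2 / (3 * n + 1) ^ 3 + 2 / (3 * n + 2) ^ 3 := by
    rw [setIntegral_congr_fun measurableSet_Ioo
      (g := fun x => (x ^ (3 * n) + x ^ (3 * n + 1)) * log x ^ 2) fun x hx => ?_,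
      integral_pow_add_pow_succ_mul_log_sq]
    · push_cast
      ring_nf
    · have hx0 := hx.1.le
      rw [norm_mul, norm_pow, norm_neg, norm_one, one_pow, one_mul]
      exact Real.norm_of_nonneg (mul_nonneg (add_nonneg (pow_nonneg hx0 _) (pow_nonneg hx0 _))
        (sq_nonneg _))
  have hF_tsum :
      EqOn (fun x => ∑' n, F n x) (fun x => log x ^ 2 / (x ^ 2 - x + 1)) (Ioo 0 1) := by
    intro x ⟨hx0, hx1⟩
    have hx : ‖x‖ < 1 := by rwa [Real.norm_of_nonneg hx0.le]
    calc ∑' n, F n x = ∑' n, log x ^ 2 * ((-1) ^ n * (x ^ (3 * n) + x ^ (3 * n + 1))) :=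
          tsum_congr fun n => by simp only [F]; ring
      _ = log x ^ 2 / (x ^ 2 - x + 1) := by
          rw [((hasSum_inv_sq_sub_add_one hx).mul_left _).tsum_eq, div_eq_mul_inv]
  have h := hasSum_integral_of_summable_integral_norm hF_int
    (by simpa only [hF_norm] using summable_inv_cube_three_mul_add)
  simpa only [hF_integral, setIntegral_congr_fun measurableSet_Ioo hF_tsum] using h

theorem HasSum.sum_range_mul_add {α : Type*} [AddCommMonoid α] [TopologicalSpace α]
    [ContinuousAdd α] [RegularSpace α] {f : ℕ → α} {a : α} (h : HasSum f a) (k : ℕ) [NeZero k] :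
    HasSum (fun n => ∑ j ∈ Finset.range k, f (k * n + j)) a := by
  refine ((Nat.divModEquiv k).symm.hasSum_iff.mpr h).prod_fiberwise fun n => ?_
  have hblock := hasSum_fintype (fun j : Fin k => f (k * n + j))
  rw [Fin.sum_univ_eq_sum_range (fun j => f (k * n + j))] at hblock
  simpa only [Function.comp_def, Nat.divModEquiv_symm_apply, mul_comm n k] using hblock

theorem hasSum_one_div_pow_three_mul_sin_pi_mul_div_three :
    HasSum (fun m : ℕ => 1 / (m : ℝ) ^ 3 * sin (π * m / 3)) (5 * π ^ 3 / 162) := by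
  have hB : (Polynomial.bernoulli 3).eval (1 / 6 : ℚ) = 5 / 108 := by
    norm_num [Polynomial.bernoulli, Finset.sum_range_succ, Polynomial.eval_monomial,
      bernoulli_eq_bernoulli'_of_ne_one]
  convert hasSum_one_div_nat_pow_mul_sin one_ne_zero (x := 1 / 6) ⟨by norm_num, by norm_num⟩
    using 1
  · ext m
    ring_nf
  · rw [show (1 / 6 : ℝ) = algebraMap ℚ ℝ (1 / 6) by norm_num, Polynomial.eval_map_algebraMap,
      Polynomial.aeval_algebraMap_apply, Polynomial.coe_aeval_eq_eval,
      show 2 * 1 + 1 = 3 from rfl, hB]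
    norm_num [Nat.factorial]
    ring

lemma sin_pi_mul_three_mul_add_div_three (n j : ℕ) :
    sin (π * ((3 * n + j : ℕ) : ℝ) / 3) = (-1) ^ n * sin (π * j / 3) := by
  rw [← sin_add_nat_mul_pi]
  push_cast
  ring_nf

lemma sum_range_three_one_div_pow_three_mul_sin (n : ℕ) :
    ∑ j ∈ Finset.range 3, 1 / ((3 * n + j : ℕ) : ℝ) ^ 3 * sin (π * ((3 * n + j : ℕ) : ℝ) / 3) =
      √3 / 4 * ((-1) ^ n * (2 / (3 * n + 1) ^ 3 + 2 / (3 * n + 2) ^ 3)) := by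
  have hsin : sin (π * 2 / 3) = √3 / 2 := by
    rw [← sin_pi_sub, ← sin_pi_div_three]
    ring_nf
  simp only [Finset.sum_range_succ, Finset.sum_range_zero, sin_pi_mul_three_mul_add_div_three]
  push_cast
  simp only [mul_zero, zero_div, sin_zero, mul_one, sin_pi_div_three, hsin]
  ring

theorem hasSum_neg_one_pow_mul_inv_cube_three_mul_add :
    HasSum (fun n : ℕ => (-1 : ℝ) ^ n * (2 / (3 * n + 1) ^ 3 + 2 / (3 * n + 2) ^ 3))
      (10 * π ^ 3 / (81 * √3)) := by
  have h := (hasSum_one_div_pow_three_mul_sin_pi_mul_div_three.sum_range_mul_add 3).mul_left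
    (4 / √3)
  have h3 : √3 ≠ 0 := by positivity
  rw [show 10 * π ^ 3 / (81 * √3) = 4 / √3 * (5 * π ^ 3 / 162) by field_simp; ring]
  refine h.congr_fun fun n => ?_
  rw [sum_range_three_one_div_pow_three_mul_sin]
  field_simp

theorem stmt13 :
    ∫ x in (0:ℝ)..1, Real.log x ^ 2 / (x ^ 2 - x + 1) =
      10 * Real.pi ^ 3 / (81 * Real.sqrt 3) := by
  rw [intervalIntegral.integral_of_le zero_le_one, integral_Ioc_eq_integral_Ioo]
  exact hasSum_integral_log_sq_div_sq_sub_add_one.unique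
    hasSum_neg_one_pow_mul_inv_cube_three_mul_add
end
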